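/- arXiv:1311.1288 — 6 statements merged into one kernel-verified Lean document; each statement's English description precedes it below -/
import Mathlib

section
/- Fix P > 0, T > 0, and 0 < K < T with total energy budget PT. Writing E = α·P·T and P_d = (PT − E)/(T − K) for α ∈ (0,1), the effective SNR ρ(α) = P_d·E/(K·P_d + E + 1) is a strictly concave function of α on (0,1). -/
/-!
Substituting `c = P T`, the effective SNR becomes `c² α (1 - α) / (q + p α)` with
`q = K c + (T - K) > 0` and `q + p = (T - K) (c + 1) > 0`. Writing `D x = q + p x`, the secant
slopes of `x ↦ a x (1 - x) / D x` over `[x, y]` and `[y, z]` differ by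
`a q (q + p) (z - x) / (D x D y D z)`, which is positive when `a > 0` and the denominators are.
-/

open Set

section AffineDenominator

variable (a p q : ℝ)

theorem slope_mul_one_sub_div_affine {x y : ℝ} (hxy : x ≠ y) (hx : q + p * x ≠ 0)
    (hy : q + p * y ≠ 0) :
    (a * y * (1 - y) / (q + p * y) - a * x * (1 - x) / (q + p * x)) / (y - x) =
      a * (q * (1 - x - y) - p * x * y) / ((q + p * x) * (q + p * y)) := by
  rw [div_sub_div _ _ hy hx, div_div, div_eq_div_iff
    (mul_ne_zero (mul_ne_zero hy hx) (sub_ne_zero.2 hxy.symm)) (mul_ne_zero hx hy)]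
  ring

theorem strictConcaveOn_mul_one_sub_div_affine {s : Set ℝ} (hs : Convex ℝ s)
    (hD : ∀ x ∈ s, 0 < q + p * x) (ha : 0 < a) (hqp : 0 < q * (q + p)) :
    StrictConcaveOn ℝ s (fun x => a * x * (1 - x) / (q + p * x)) := by
  refine strictConcaveOn_of_slope_strict_anti_adjacent hs fun {x y z} hx hz hxy hyz => ?_
  have hy : y ∈ s := hs.ordConnected.out hx hz ⟨hxy.le, hyz.le⟩
  have hDx := hD x hx
  have hDy := hD y hy
  have hDz := hD z hz
  rw [slope_mul_one_sub_div_affine a p q hxy.ne hDx.ne' hDy.ne',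
    slope_mul_one_sub_div_affine a p q hyz.ne hDy.ne' hDz.ne']
  have hdiff : a * (q * (1 - x - y) - p * x * y) / ((q + p * x) * (q + p * y)) -
      a * (q * (1 - y - z) - p * y * z) / ((q + p * y) * (q + p * z)) =
      a * (q * (q + p)) * (z - x) / ((q + p * x) * (q + p * y) * (q + p * z)) := by
    rw [div_sub_div _ _ (by positivity) (by positivity), div_eq_div_iff (by positivity)
      (by positivity)]
    ring
  have hpos : 0 < a * (q * (q + p)) * (z - x) / ((q + p * x) * (q + p * y) * (q + p * z)) := by
    have := sub_pos.2 (hxy.trans hyz)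
    positivity
  linarith

end AffineDenominator

theorem snr_strictConcaveOn_general (P T K : ℝ) (hP : 0 < P)
    (hK : 0 < K) (hKT : K < T) :
    StrictConcaveOn ℝ (Set.Ioo (0 : ℝ) 1)
      (fun α : ℝ =>
        ((P * T - α * P * T) / (T - K)) * (α * P * T) /
          (K * ((P * T - α * P * T) / (T - K)) + α * P * T + 1)) := by
  have hTK : 0 < T - K := sub_pos.2 hKT
  have hc : 0 < P * T := mul_pos hP (hK.trans hKT)
  set q := K * (P * T) + (T - K)
  set p := P * T * (T - K) - K * (P * T)
  have hq : 0 < q := by positivity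
  have hqp : 0 < q + p := by
    have : q + p = (T - K) * (P * T + 1) := by ring
    rw [this]
    positivity
  have hD : ∀ α ∈ Ioo (0 : ℝ) 1, 0 < q + p * α := fun α ⟨h0, h1⟩ => by
    have : q + p * α = q * (1 - α) + (q + p) * α := by ring
    rw [this]
    exact add_pos (mul_pos hq (sub_pos.2 h1)) (mul_pos hqp h0)
  refine (strictConcaveOn_mul_one_sub_div_affine ((P * T) ^ 2) p q (convex_Ioo 0 1) hD
    (by positivity) (mul_pos hq hqp)).congr fun α _ => ?_
  have hden : K * ((P * T - α * P * T) / (T - K)) + α * P * T + 1 = (q + p * α) / (T - K) := by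
    field_simp
    ring
  rw [hden, div_mul_eq_mul_div, div_div_div_cancel_right₀ hTK.ne']
  ring

theorem snr_strictConcaveOn (P T K : ℝ) (hP : 0 < P) (hT : 0 < T)
    (hK : 0 < K) (hKT : K < T) :
    StrictConcaveOn ℝ (Set.Ioo (0 : ℝ) 1)
      (fun α : ℝ =>
        ((P * T - α * P * T) / (T - K)) * (α * P * T) /
          (K * ((P * T - α * P * T) / (T - K)) + α * P * T + 1)) :=
  snr_strictConcaveOn_general P T K hP hK hKT
end

section
/- If T = 2K with K > 0 and P > 0, then the choice α = 1/2 maximizes ρ(α) = P_d·E/(K·P_d + E + 1) over α ∈ (0,1), where E = αPT and P_d = (PT − E)/(T − K), and the maximum value is (PT)²/(2T(1 + PT)). -/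
/-! With `T = 2K` the denominator of `ρ` no longer depends on `α`: the power `P_d = 2P(1 - α)`
makes it `2KP + 1`, so `ρ(α) = α(1 - α) · 4KP²/(2KP + 1)`, a downward parabola with its vertex
at `α = 1/2`. -/

lemma mul_one_sub_le_quarter (α : ℝ) : α * (1 - α) ≤ 1 / 4 := by
  nlinarith [sq_nonneg (α - 1 / 2)]

lemma isMaxOn_mul_one_sub_mul {c : ℝ} (hc : 0 ≤ c) (s : Set ℝ) :
    IsMaxOn (fun α : ℝ => α * (1 - α) * c) s (1 / 2) := fun α _ => by
  have : (1 / 2 : ℝ) * (1 - 1 / 2) = 1 / 4 := by norm_num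
  simpa only [Set.mem_ofPred_eq, this] using
    mul_le_mul_of_nonneg_right (mul_one_sub_le_quarter α) hc

lemma snr_eq_of_T_eq_two_mul (P K α : ℝ) (hK : K ≠ 0) :
    ((P * (2 * K) - α * P * (2 * K)) / (2 * K - K)) * (α * P * (2 * K)) /
        (K * ((P * (2 * K) - α * P * (2 * K)) / (2 * K - K)) + α * P * (2 * K) + 1)
      = α * (1 - α) * (4 * K * P ^ 2 / (2 * K * P + 1)) := by
  have hPd : (P * (2 * K) - α * P * (2 * K)) / (2 * K - K) = 2 * P * (1 - α) := by
    rw [show 2 * K - K = K by ring]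
    field_simp
  have hden : K * (2 * P * (1 - α)) + α * P * (2 * K) + 1 = 2 * K * P + 1 := by ring
  rw [hPd, hden]
  ring

theorem snr_opt_T_eq_2K (P K T : ℝ) (hP : 0 < P) (hK : 0 < K) (hT : T = 2 * K) :
    (IsMaxOn
      (fun α : ℝ =>
        ((P * T - α * P * T) / (T - K)) * (α * P * T) /
          (K * ((P * T - α * P * T) / (T - K)) + α * P * T + 1))
      (Set.Ioo (0 : ℝ) 1) (1 / 2)) ∧
    ((P * T - (1 / 2) * P * T) / (T - K)) * ((1 / 2) * P * T) /
        (K * ((P * T - (1 / 2) * P * T) / (T - K)) + (1 / 2) * P * T + 1)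
      = (P * T) ^ 2 / (2 * T * (1 + P * T)) := by
  subst hT
  simp only [snr_eq_of_T_eq_two_mul P K _ hK.ne']
  refine ⟨isMaxOn_mul_one_sub_mul (by positivity) _, ?_⟩
  field_simp
  ring
end

section
/- For fixed K and T with 0 < K < T, the optimal training fraction α*(P) that maximizes ρ tends to √(T−K)/(√(T−K) + √K) as P → ∞ (case T > 2K; for T = 2K the limit is 1/2, consistent with the same formula). -/
open Filter Topology

theorem tendsto_one_add_mul_mul_div_mul_atTop {a : ℝ} (ha : 0 < a) (b c : ℝ) :
    Tendsto (fun P : ℝ => (1 + P * a) * b / (P * a * c)) atTop (𝓝 (b / c)) := by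
  have hPa : Tendsto (fun P : ℝ => P * a) atTop atTop := tendsto_id.atTop_mul_const ha
  have hlim : Tendsto (fun P : ℝ => ((P * a)⁻¹ + 1) * (b / c)) atTop (𝓝 (b / c)) := by
    simpa using ((tendsto_inv_atTop_zero.comp hPa).add_const 1).mul_const (b / c)
  refine hlim.congr' ?_
  filter_upwards [eventually_gt_atTop 0] with P hP
  field_simp

theorem div_sub_sqrt_mul_div_sub_one {p q : ℝ} (hq : 0 ≤ q) (hqp : q < p) :
    p / (p - q) - √(p / (p - q) * (p / (p - q) - 1)) = √p / (√p + √q) := by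
  have hpq : 0 < p - q := sub_pos.mpr hqp
  have hsq : √q < √p := Real.sqrt_lt_sqrt hq hqp
  have hprod : p / (p - q) * (p / (p - q) - 1) = (√p * √q / (p - q)) ^ 2 := by
    rw [div_pow, mul_pow, Real.sq_sqrt (by linarith), Real.sq_sqrt hq]
    field_simp
    ring
  have hsum : 0 < √p + √q := by linarith [Real.sqrt_nonneg q]
  have hfactor : p - q = (√p - √q) * (√p + √q) := by
    linear_combination (Real.sq_sqrt hq) - (Real.sq_sqrt (by linarith : 0 ≤ p))
  rw [hprod, Real.sqrt_sq (by positivity), div_sub_div_same,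
    div_eq_div_iff hpq.ne' hsum.ne', hfactor]
  nth_rewrite 1 [← Real.mul_self_sqrt (by linarith : 0 ≤ p)]
  ring

theorem alpha_star_highSNR_limit (K T : ℝ) (hK : 0 < K) (hT : 2 * K < T) :
    Filter.Tendsto
      (fun P : ℝ =>
        let γ : ℝ := (1 + P * T) * (T - K) / (P * T * (T - 2 * K))
        γ - Real.sqrt (γ * (γ - 1)))
      Filter.atTop
      (nhds (Real.sqrt (T - K) / (Real.sqrt (T - K) + Real.sqrt K))) := by
  have hγ : Tendsto (fun P : ℝ => (1 + P * T) * (T - K) / (P * T * (T - 2 * K))) atTop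
      (𝓝 ((T - K) / (T - K - K))) := by
    rw [show T - K - K = T - 2 * K by ring]
    exact tendsto_one_add_mul_mul_div_mul_atTop (by linarith) _ _
  have hcont : ContinuousAt (fun x : ℝ => x - √(x * (x - 1))) ((T - K) / (T - K - K)) := by
    fun_prop
  rw [← div_sub_sqrt_mul_div_sub_one hK.le (by linarith)]
  exact hcont.tendsto.comp hγ
end

section
/- For fixed K, T with T > 2K > 0, the maximized effective SNR ρ*(P) = (PT/(T − 2K))·(√γ − √(γ−1))² with γ = (1+PT)(T−K)/(PT(T−2K)) satisfies ρ*(P)/P → T/(√(T−K) + √K)² as P → ∞. -/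
/-!
As `P → ∞`, `γ(P) → c := (T - K)/(T - 2K)` and `ρ*(P)/P = T/(T - 2K) · (√γ - √(γ - 1))²`,
so the limit is `T/(T - 2K) · (√c - √(c - 1))²`. Rationalizing, `(√c - √(c - 1))²` is the
inverse of `(√c + √(c - 1))²`, and `√(T - 2K) (√c + √(c - 1)) = √(T - K) + √K`.
-/

open Filter Topology Real

lemma tendsto_one_add_mul_div_mul_atTop (a b : ℝ) :
    Tendsto (fun x : ℝ => (1 + x) * a / (x * b)) atTop (𝓝 (a / b)) := by
  have h_inv : Tendsto (fun x : ℝ => x⁻¹ + 1) atTop (𝓝 (0 + 1)) :=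
    tendsto_inv_atTop_zero.add_const 1
  rw [zero_add] at h_inv
  refine (one_mul (a / b) ▸ h_inv.mul_const (a / b)).congr' ?_
  filter_upwards [eventually_gt_atTop 0] with x hx
  rw [mul_div_mul_comm]
  field_simp

lemma sq_sqrt_sub_sqrt_sub_one {c : ℝ} (hc : 1 ≤ c) :
    (√c - √(c - 1)) ^ 2 = ((√c + √(c - 1)) ^ 2)⁻¹ := by
  have h : (√c - √(c - 1)) * (√c + √(c - 1)) = 1 := by
    nlinarith [sq_sqrt (show 0 ≤ c by linarith), sq_sqrt (show 0 ≤ c - 1 by linarith)]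
  rw [← inv_pow]
  exact congrArg (· ^ 2) (eq_inv_of_mul_eq_one_left h)

lemma sqrt_div_sub_add_sqrt_div_sub_sub_one {a b : ℝ} (hb : 0 ≤ b) (hab : b < a) :
    √(a / (a - b)) + √(a / (a - b) - 1) = (√a + √b) / √(a - b) := by
  have hab' : a - b ≠ 0 := by linarith
  have hc : a / (a - b) - 1 = b / (a - b) := by field_simp; ring
  rw [hc, sqrt_div (by linarith), sqrt_div hb, add_div]

theorem rho_star_highSNR_limit (K T : ℝ) (hK : 0 < K) (hT : 2 * K < T) :
    Filter.Tendsto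
      (fun P : ℝ =>
        let γ : ℝ := (1 + P * T) * (T - K) / (P * T * (T - 2 * K))
        (P * T / (T - 2 * K)) * (Real.sqrt γ - Real.sqrt (γ - 1)) ^ 2 / P)
      Filter.atTop
      (nhds (T / (Real.sqrt (T - K) + Real.sqrt K) ^ 2)) := by
  have hd : 0 < T - 2 * K := by linarith
  set c := (T - K) / (T - 2 * K)
  have hγ := (tendsto_one_add_mul_div_mul_atTop (T - K) (T - 2 * K)).comp
    (tendsto_id.atTop_mul_const (by linarith : 0 < T))
  have hf : Continuous fun x : ℝ => (√x - √(x - 1)) ^ 2 := by fun_prop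
  have h_lim : T / (T - 2 * K) * (√c - √(c - 1)) ^ 2 = T / (√(T - K) + √K) ^ 2 := by
    have hsum := sqrt_div_sub_add_sqrt_div_sub_sub_one hK.le (by linarith : K < T - K)
    rw [show T - K - K = T - 2 * K by ring] at hsum
    rw [sq_sqrt_sub_sqrt_sub_one, hsum, div_pow, sq_sqrt hd.le]
    · field_simp
    · rw [one_le_div hd]; linarith
  rw [← h_lim]
  refine ((hf.tendsto c).comp hγ |>.const_mul (T / (T - 2 * K))).congr' ?_
  filter_upwards [eventually_gt_atTop 0] with P hP
  simp only [Function.comp, id]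
  field_simp
end

section
/- For fixed K, T with T > 2K > 0, the maximized effective SNR ρ*(P) satisfies ρ*(P)/P² → T²/(4(T−K)) as P → 0⁺; equivalently ρ*(P) ~ (PT)²/(4(T−K)) in the low-SNR limit. -/
/-!
Rationalizing, `√γ - √(γ - 1) = 1 / (√γ + √(γ - 1))`, hence
`ρ*(P) / P² = T / ((T - 2K) (√(Pγ) + √(P(γ - 1)))²)`. As `P → 0⁺` both `Pγ` and `P(γ - 1)`
tend to `c = (T - K) / (T (T - 2K)) > 0`, and the limit is `T / ((T - 2K) · 4c) = T² / (4(T - K))`.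
-/

open Filter Topology Real

theorem sq_sqrt_sub_sqrt_sub_one_div {p γ : ℝ} (hp : 0 < p) (hγ : 1 ≤ γ) :
    (√γ - √(γ - 1)) ^ 2 / p = ((√(p * γ) + √(p * (γ - 1))) ^ 2)⁻¹ := by
  have hconj : (√γ - √(γ - 1)) * (√γ + √(γ - 1)) = 1 := by
    linear_combination sq_sqrt (by linarith : 0 ≤ γ) - sq_sqrt (by linarith : 0 ≤ γ - 1)
  rw [sqrt_mul hp.le, sqrt_mul hp.le, ← mul_add, mul_pow, sq_sqrt hp.le]
  field_simp
  rw [← mul_pow, hconj, one_pow]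

theorem tendsto_sq_sqrt_sub_sqrt_sub_one_div {α : Type*} {l : Filter α} {P γ : α → ℝ} {c : ℝ}
    (hc : 0 < c) (hP : ∀ᶠ x in l, 0 < P x) (hP0 : Tendsto P l (𝓝 0))
    (hPγ : Tendsto (fun x => P x * γ x) l (𝓝 c)) :
    Tendsto (fun x => (√(γ x) - √(γ x - 1)) ^ 2 / P x) l (𝓝 (4 * c)⁻¹) := by
  have hPγ₁ : Tendsto (fun x => P x * (γ x - 1)) l (𝓝 c) := by
    simpa [mul_sub] using hPγ.sub hP0
  have hγ : ∀ᶠ x in l, 1 ≤ γ x := by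
    filter_upwards [hP, hPγ₁.eventually (lt_mem_nhds hc)] with x hx hx₁
    linarith [pos_of_mul_pos_right hx₁ hx.le]
  have hlim : Tendsto (fun x => ((√(P x * γ x) + √(P x * (γ x - 1))) ^ 2)⁻¹) l
      (𝓝 (4 * c)⁻¹) := by
    have h := ((hPγ.sqrt.add hPγ₁.sqrt).pow 2).inv₀ (by positivity)
    rwa [← two_mul, mul_pow, sq_sqrt hc.le, show (2 : ℝ) ^ 2 = 4 by norm_num] at h
  refine hlim.congr' ?_
  filter_upwards [hP, hγ] with x hx hx₁
  exact (sq_sqrt_sub_sqrt_sub_one_div hx hx₁).symm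

theorem rho_star_lowSNR_limit (K T : ℝ) (hK : 0 < K) (hT : 2 * K < T) :
    Filter.Tendsto
      (fun P : ℝ =>
        let γ : ℝ := (1 + P * T) * (T - K) / (P * T * (T - 2 * K))
        (P * T / (T - 2 * K)) * (Real.sqrt γ - Real.sqrt (γ - 1)) ^ 2 / P ^ 2)
      (nhdsWithin 0 (Set.Ioi 0))
      (nhds (T ^ 2 / (4 * (T - K)))) := by
  have hT₀ : 0 < T := by linarith
  have hT₁ : 0 < T - K := by linarith
  have hT₂ : 0 < T - 2 * K := by linarith
  have hPγ : Tendsto (fun P => P * ((1 + P * T) * (T - K) / (P * T * (T - 2 * K))))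
      (𝓝[>] 0) (𝓝 ((T - K) / (T * (T - 2 * K)))) := by
    have hcont : Tendsto (fun P => (1 + P * T) * (T - K) / (T * (T - 2 * K))) (𝓝[>] 0)
        (𝓝 ((T - K) / (T * (T - 2 * K)))) := by
      exact tendsto_nhdsWithin_of_tendsto_nhds ((by fun_prop : Continuous fun P : ℝ =>
        (1 + P * T) * (T - K) / (T * (T - 2 * K))).tendsto' 0 _ (by simp))
    refine hcont.congr' ?_
    filter_upwards [self_mem_nhdsWithin] with P (hP : 0 < P)
    field_simp
  have hρ := (tendsto_sq_sqrt_sub_sqrt_sub_one_div (by positivity)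
    (eventually_mem_nhdsWithin : ∀ᶠ P in 𝓝[>] (0 : ℝ), 0 < P)
    (tendsto_nhdsWithin_of_tendsto_nhds tendsto_id) hPγ).const_mul (T / (T - 2 * K))
  rw [show T ^ 2 / (4 * (T - K)) = T / (T - 2 * K) * (4 * ((T - K) / (T * (T - 2 * K))))⁻¹ by
    field_simp
    exact (div_self (by linarith)).symm]
  refine hρ.congr' ?_
  filter_upwards [self_mem_nhdsWithin] with P (hP : 0 < P)
  field_simp
end

section
/- The zero-forcing per-user rate R^ZF(P) = (1 − K*/T)·log₂(1 + ρ(P)·(M − K*)) with ρ(P) = P/(1 + (KP+1)/(KP)) satisfies R^ZF(P)/log₂(P) → 1 − K*/T as P → ∞, provided M > K*. -/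
/-!
Since `(K P + 1) / (K P) → 1`, the effective SNR `ρ(P)` grows like `P / 2`, so
`log (1 + ρ(P) (M - K*)) = log P + O(1)` and the ratio of logarithms tends to `1`.
-/

open Filter Topology Real

theorem tendsto_log_div_log_of_tendsto_div {f : ℝ → ℝ} {L : ℝ} (hL : 0 < L)
    (hf : Tendsto (fun x => f x / x) atTop (𝓝 L)) :
    Tendsto (fun x => log (f x) / log x) atTop (𝓝 1) := by
  have hlog_ratio : Tendsto (fun x => log (f x / x) / log x + 1) atTop (𝓝 (0 + 1)) :=
    ((hf.log hL.ne').div_atTop tendsto_log_atTop).add_const 1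
  rw [zero_add] at hlog_ratio
  refine hlog_ratio.congr' ?_
  filter_upwards [hf.eventually (eventually_gt_nhds hL), eventually_gt_atTop 1]
    with x hfx hx
  have hx0 : 0 < x := one_pos.trans hx
  have hfx0 : f x ≠ 0 := fun h => by simp [h] at hfx
  rw [log_div hfx0 hx0.ne', sub_div, div_self (log_pos hx).ne', sub_add_cancel]

theorem logb_div_logb {b : ℝ} (hb : 1 < b) (y x : ℝ) : logb b y / logb b x = log y / log x :=
  div_div_div_cancel_right₀ (log_pos hb).ne' _ _

theorem tendsto_add_one_div_self_atTop {K : ℝ} (hK : 0 < K) :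
    Tendsto (fun P : ℝ => (K * P + 1) / (K * P)) atTop (𝓝 1) := by
  have hKP : Tendsto (fun P : ℝ => K * P) atTop atTop := tendsto_id.const_mul_atTop hK
  have h := (hKP.inv_tendsto_atTop).const_add 1
  rw [add_zero] at h
  refine h.congr' ?_
  filter_upwards [eventually_gt_atTop 0] with P hP
  have hKP0 : K * P ≠ 0 := by positivity
  simp only [Pi.inv_apply]
  field_simp

theorem tendsto_zf_snr_div {K m : ℝ} (hK : 0 < K) :
    Tendsto (fun P : ℝ => (1 + P / (1 + (K * P + 1) / (K * P)) * m) / P) atTop (𝓝 (m / 2)) := by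
  have hden : Tendsto (fun P : ℝ => 1 + (K * P + 1) / (K * P)) atTop (𝓝 2) := by
    simpa [one_add_one_eq_two] using (tendsto_add_one_div_self_atTop hK).const_add 1
  have h := tendsto_inv_atTop_zero.add ((hden.inv₀ two_ne_zero).mul_const m)
  rw [zero_add, ← div_eq_inv_mul] at h
  refine h.congr' ?_
  filter_upwards [eventually_gt_atTop 0] with P hP
  have hden_pos : 0 < 1 + (K * P + 1) / (K * P) := by positivity
  field_simp

theorem zf_rate_dof_general (M Kstar : ℕ) (hM : Kstar < M)
    (T K : ℝ) (hK : 0 < K) :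
    Filter.Tendsto
      (fun P : ℝ =>
        (1 - (Kstar : ℝ) / T) *
          Real.logb 2 (1 + (P / (1 + (K * P + 1) / (K * P))) * ((M : ℝ) - Kstar)) /
          Real.logb 2 P)
      Filter.atTop (nhds (1 - (Kstar : ℝ) / T)) := by
  have hm : 0 < (M : ℝ) - Kstar := sub_pos.mpr (by exact_mod_cast hM)
  have hratio := tendsto_log_div_log_of_tendsto_div (half_pos hm) (tendsto_zf_snr_div hK)
  simpa only [mul_div_assoc, logb_div_logb one_lt_two, mul_one] using hratio.const_mul _

theorem zf_rate_dof (M Kstar : ℕ) (hM : Kstar < M) (hKs : 1 ≤ Kstar)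
    (T K : ℝ) (hT : (Kstar : ℝ) < T) (hK : 0 < K) :
    Filter.Tendsto
      (fun P : ℝ =>
        (1 - (Kstar : ℝ) / T) *
          Real.logb 2 (1 + (P / (1 + (K * P + 1) / (K * P))) * ((M : ℝ) - Kstar)) /
          Real.logb 2 P)
      Filter.atTop (nhds (1 - (Kstar : ℝ) / T)) :=
  zf_rate_dof_general M Kstar hM T K hK
end
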